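/- arXiv:1210.6506 — 9 statements merged into one kernel-verified Lean document; each statement's English description precedes it below -/
import Mathlib

section
/- Let h : a → b be an isomorphism in a metric-enriched category K⁰ with subcategory K (same objects), and define the norm μ(f) = inf { ρ(j ∘ f, i) : i, j ∈ K compatible arrows }. Then μ(h) = μ(h⁻¹). -/
open CategoryTheory

universe u v

/-- A category enriched over metric spaces: each hom-set carries an (extended) metric `ρ`
such that composition is non-expansive on both sides. -/
structure MetricEnrichment (C : Type u) [Category.{v} C] where
  ρ : ∀ {a b : C}, (a ⟶ b) → (a ⟶ b) → ENNReal
  ρ_self : ∀ {a b : C} (f : a ⟶ b), ρ f f = 0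
  eq_of_ρ_eq_zero : ∀ {a b : C} {f g : a ⟶ b}, ρ f g = 0 → f = g
  ρ_comm : ∀ {a b : C} (f g : a ⟶ b), ρ f g = ρ g f
  ρ_triangle : ∀ {a b : C} (f g h : a ⟶ b), ρ f h ≤ ρ f g + ρ g h
  precomp_nonexpansive : ∀ {a b c : C} (g : a ⟶ b) (f₀ f₁ : b ⟶ c),
    ρ (g ≫ f₀) (g ≫ f₁) ≤ ρ f₀ f₁
  postcomp_nonexpansive : ∀ {a b c : C} (f₀ f₁ : a ⟶ b) (h : b ⟶ c),
    ρ (f₀ ≫ h) (f₁ ≫ h) ≤ ρ f₀ f₁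

/-- A (wide) subcategory with the same objects, given by a class of arrows containing
identities and closed under composition. -/
structure WideSubcat (C : Type u) [Category.{v} C] where
  mem : ∀ {a b : C}, (a ⟶ b) → Prop
  id_mem : ∀ a : C, mem (𝟙 a)
  comp_mem : ∀ {a b c : C} {f : a ⟶ b} {g : b ⟶ c}, mem f → mem g → mem (f ≫ g)

/-- The norm `μ(f) = inf { ρ(j ∘ f, i) : i, j ∈ K compatible }` of an arrow of the big
category, induced by the pair (K, K⁰). -/
noncomputable def normOf {C : Type u} [Category.{v} C] (M : MetricEnrichment C)
    (K : WideSubcat C) {a b : C} (f : a ⟶ b) : ENNReal :=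
  ⨅ (c : C) (i : a ⟶ c) (j : b ⟶ c) (_ : K.mem i) (_ : K.mem j), M.ρ (f ≫ j) i

/-! Precomposition with an isomorphism `h` is an isometry of hom-sets, so
`ρ(j ∘ h, i) = ρ(j, i ∘ h⁻¹)`: every witness pair `(i, j)` for `μ(h)` is a witness pair `(j, i)` for
`μ(h⁻¹)` of the same value, and symmetrically. -/

namespace MetricEnrichment

variable {C : Type u} [Category.{v} C] (M : MetricEnrichment C)

theorem ρ_iso_hom_comp {a b c : C} (h : a ≅ b) (f g : b ⟶ c) :
    M.ρ (h.hom ≫ f) (h.hom ≫ g) = M.ρ f g :=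
  le_antisymm (M.precomp_nonexpansive _ _ _) <| by
    simpa using M.precomp_nonexpansive h.inv (h.hom ≫ f) (h.hom ≫ g)

theorem ρ_iso_hom_comp_eq_ρ_inv_comp {a b c : C} (h : a ≅ b) (f : b ⟶ c) (g : a ⟶ c) :
    M.ρ (h.hom ≫ f) g = M.ρ (h.inv ≫ g) f :=
  calc M.ρ (h.hom ≫ f) g = M.ρ (h.hom ≫ f) (h.hom ≫ h.inv ≫ g) := by rw [Iso.hom_inv_id_assoc]
    _ = M.ρ (h.inv ≫ g) f := by rw [M.ρ_iso_hom_comp, M.ρ_comm]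

end MetricEnrichment

section normOf

variable {C : Type u} [Category.{v} C] (M : MetricEnrichment C) (K : WideSubcat C)

theorem normOf_le {a b c : C} (f : a ⟶ b) {i : a ⟶ c} {j : b ⟶ c} (hi : K.mem i)
    (hj : K.mem j) : normOf M K f ≤ M.ρ (f ≫ j) i :=
  iInf_le_of_le c <| iInf_le_of_le i <| iInf_le_of_le j <| iInf_le_of_le hi <| iInf_le _ hj

theorem normOf_hom_le_normOf_inv {a b : C} (h : a ≅ b) :
    normOf M K h.hom ≤ normOf M K h.inv := by
  simp only [normOf, le_iInf_iff]
  intro c i j hi hj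
  rw [← M.ρ_iso_hom_comp_eq_ρ_inv_comp]
  exact normOf_le M K h.hom hj hi

end normOf

/-- If `h : a ≅ b` is an isomorphism in a metric-enriched category with a wide
subcategory `K`, then `μ(h) = μ(h⁻¹)`. -/
theorem stmt0 {C : Type u} [Category.{v} C] (M : MetricEnrichment C) (K : WideSubcat C)
    {a b : C} (h : a ≅ b) : normOf M K h.hom = normOf M K h.inv :=
  le_antisymm (normOf_hom_le_normOf_inv M K h) (normOf_hom_le_normOf_inv M K h.symm)
end

section
/- Let X, Y be normed spaces, ε ≥ 0, and f : X → Y a linear map satisfying (1−ε)‖x‖ ≤ ‖f(x)‖ ≤ ‖x‖ for all x ∈ X. Define a norm on Z = X ⊕ Y by ‖(x,y)‖ = inf{ ‖u‖_X + ‖v‖_Y + ε‖w‖_X : (x,y) = (u,v) + (w, −f(w)), u,w ∈ X, v ∈ Y }. Then the canonical injections i : X → Z, x ↦ (x,0) and j : Y → Z, y ↦ (0,y) are isometric embeddings. -/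
/-!
The trivial decompositions `(x, 0) = (x, 0) + (0, -f 0)` and `(0, y) = (0, y) + (0, -f 0)` bound
the norms from above. Conversely, any decomposition of `(x, 0)` has `v = f w`, so the lower bound
`(1 - ε)‖w‖ ≤ ‖f w‖` pays for `‖x‖ ≤ ‖u‖ + ‖w‖`; any decomposition of `(0, y)` has `u = -w`, so
`‖f w‖ ≤ ‖w‖ = ‖u‖` pays for `‖y‖ ≤ ‖v‖ + ‖f w‖`.
-/

section

variable {X Y : Type*} [NormedAddCommGroup X] [Module ℝ X] [NormedAddCommGroup Y] [Module ℝ Y]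

def decompositionCosts (ε : ℝ) (f : X →ₗ[ℝ] Y) (p : X × Y) : Set ℝ :=
  {r | ∃ (u w : X) (v : Y), p.1 = u + w ∧ p.2 = v - f w ∧ r = ‖u‖ + ‖v‖ + ε * ‖w‖}

theorem isLeast_decompositionCosts_inl {ε : ℝ} {f : X →ₗ[ℝ] Y}
    (hf : ∀ x : X, (1 - ε) * ‖x‖ ≤ ‖f x‖) (x : X) :
    IsLeast (decompositionCosts ε f (x, 0)) ‖x‖ := by
  refine ⟨⟨x, 0, 0, by simp, by simp, by simp⟩, ?_⟩
  rintro r ⟨u, w, v, hx : x = u + w, hv : 0 = v - f w, rfl⟩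
  obtain rfl : v = f w := sub_eq_zero.mp hv.symm
  calc ‖x‖ ≤ ‖u‖ + ‖w‖ := hx ▸ norm_add_le u w
    _ = ‖u‖ + (1 - ε) * ‖w‖ + ε * ‖w‖ := by ring
    _ ≤ ‖u‖ + ‖f w‖ + ε * ‖w‖ := by gcongr; exact hf w

theorem isLeast_decompositionCosts_inr {ε : ℝ} (hε : 0 ≤ ε) {f : X →ₗ[ℝ] Y}
    (hf : ∀ x : X, ‖f x‖ ≤ ‖x‖) (y : Y) :
    IsLeast (decompositionCosts ε f (0, y)) ‖y‖ := by
  refine ⟨⟨0, 0, y, by simp, by simp, by simp⟩, ?_⟩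
  rintro r ⟨u, w, v, hu : 0 = u + w, hy : y = v - f w, rfl⟩
  obtain rfl : u = -w := eq_neg_of_add_eq_zero_left hu.symm
  calc ‖y‖ ≤ ‖v‖ + ‖f w‖ := hy ▸ norm_sub_le v (f w)
    _ ≤ ‖-w‖ + ‖v‖ := by rw [norm_neg, add_comm]; gcongr; exact hf w
    _ ≤ ‖-w‖ + ‖v‖ + ε * ‖w‖ := le_add_of_nonneg_right (by positivity)

end

/-- Let `f : X → Y` be linear with `(1−ε)‖x‖ ≤ ‖f x‖ ≤ ‖x‖`, and equip `Z = X ⊕ Y` with the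
norm `N(x,y) = inf{‖u‖ + ‖v‖ + ε‖w‖ : (x,y) = (u,v) + (w, −f w)}`.  Then the canonical
injections `i : x ↦ (x,0)` and `j : y ↦ (0,y)` are isometric. -/
theorem stmt1 {X Y : Type*} [NormedAddCommGroup X] [NormedSpace ℝ X]
    [NormedAddCommGroup Y] [NormedSpace ℝ Y]
    (ε : ℝ) (hε : 0 ≤ ε) (f : X →ₗ[ℝ] Y)
    (hf : ∀ x : X, (1 - ε) * ‖x‖ ≤ ‖f x‖ ∧ ‖f x‖ ≤ ‖x‖)
    (N : X × Y → ℝ)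
    (hN : ∀ p : X × Y, N p = sInf {r : ℝ | ∃ (u w : X) (v : Y),
      p.1 = u + w ∧ p.2 = v - f w ∧ r = ‖u‖ + ‖v‖ + ε * ‖w‖}) :
    (∀ x : X, N (x, 0) = ‖x‖) ∧ (∀ y : Y, N (0, y) = ‖y‖) :=
  ⟨fun x => (hN _).trans (isLeast_decompositionCosts_inl (fun w => (hf w).1) x).csInf_eq,
    fun y => (hN _).trans (isLeast_decompositionCosts_inr hε (fun w => (hf w).2) y).csInf_eq⟩
end

section
/- In a normed category (K, K⁰) with the almost amalgamation property: for every ε, δ > 0 and all K⁰-arrows f : c → a and g : c → b with μ(f) < ε and μ(g) < δ, there exist K-arrows f' : a → w and g' : b → w such that ρ(f'∘f, g'∘g) < ε + δ. -/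
/-! Choose `K`-witnesses `(i, j)` for `μ(f) < ε` and `(i', j')` for `μ(g) < δ`, and almost
amalgamate `i` and `i'` by `K`-arrows `p`, `q` with error smaller than the remaining slack.
Since postcomposition is non-expansive, `j ≫ p` and `j' ≫ q` amalgamate `f` and `g` up to
`ρ(f ≫ j, i) + ρ(g ≫ j', i') + ρ(i ≫ p, i' ≫ q) < ε + δ`. -/

open CategoryTheory

universe u v

/-- The almost amalgamation property of the subcategory `K`. -/
def AlmostAmalg {C : Type u} [Category.{v} C] (M : MetricEnrichment C)
    (K : WideSubcat C) : Prop :=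
  ∀ {c a b : C} (f : c ⟶ a) (g : c ⟶ b), K.mem f → K.mem g →
    ∀ ε : ENNReal, 0 < ε →
      ∃ (w : C) (f' : a ⟶ w) (g' : b ⟶ w), K.mem f' ∧ K.mem g' ∧
        M.ρ (f ≫ f') (g ≫ g') < ε

namespace MetricEnrichment

variable {C : Type u} [Category.{v} C] (M : MetricEnrichment C)

theorem ρ_comp_comp_le {c a b d e w : C} {f : c ⟶ a} {g : c ⟶ b} {i : c ⟶ d} {i' : c ⟶ e}
    (j : a ⟶ d) (j' : b ⟶ e) (p : d ⟶ w) (q : e ⟶ w) :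
    M.ρ (f ≫ j ≫ p) (g ≫ j' ≫ q) ≤
      M.ρ (f ≫ j) i + M.ρ (g ≫ j') i' + M.ρ (i ≫ p) (i' ≫ q) := by
  have hf : M.ρ (f ≫ j ≫ p) (i ≫ p) ≤ M.ρ (f ≫ j) i := by
    simpa using M.postcomp_nonexpansive (f ≫ j) i p
  have hg : M.ρ (i' ≫ q) (g ≫ j' ≫ q) ≤ M.ρ (g ≫ j') i' := by
    simpa [M.ρ_comm i'] using M.postcomp_nonexpansive i' (g ≫ j') q
  calc M.ρ (f ≫ j ≫ p) (g ≫ j' ≫ q)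
      ≤ M.ρ (f ≫ j ≫ p) (i ≫ p) + (M.ρ (i ≫ p) (i' ≫ q) + M.ρ (i' ≫ q) (g ≫ j' ≫ q)) :=
        (M.ρ_triangle _ _ _).trans (add_le_add_right (M.ρ_triangle _ _ _) _)
    _ ≤ M.ρ (f ≫ j) i + (M.ρ (i ≫ p) (i' ≫ q) + M.ρ (g ≫ j') i') := by gcongr
    _ = M.ρ (f ≫ j) i + M.ρ (g ≫ j') i' + M.ρ (i ≫ p) (i' ≫ q) := by ring

end MetricEnrichment

theorem exists_mem_ρ_lt_of_normOf_lt {C : Type u} [Category.{v} C] {M : MetricEnrichment C}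
    {K : WideSubcat C} {a b : C} {f : a ⟶ b} {ε : ENNReal} (h : normOf M K f < ε) :
    ∃ (d : C) (i : a ⟶ d) (j : b ⟶ d), K.mem i ∧ K.mem j ∧ M.ρ (f ≫ j) i < ε := by
  simpa only [normOf, iInf_lt_iff, exists_prop] using h

theorem stmt4_general {C : Type u} [Category.{v} C] (M : MetricEnrichment C) (K : WideSubcat C)
    (amalg : AlmostAmalg M K) (ε δ : ENNReal)
    {c a b : C} (f : c ⟶ a) (g : c ⟶ b)
    (hf : normOf M K f < ε) (hg : normOf M K g < δ) :
    ∃ (w : C) (f' : a ⟶ w) (g' : b ⟶ w), K.mem f' ∧ K.mem g' ∧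
      M.ρ (f ≫ f') (g ≫ g') < ε + δ := by
  obtain ⟨d, i, j, hi, hj, hfj⟩ := exists_mem_ρ_lt_of_normOf_lt hf
  obtain ⟨e, i', j', hi', hj', hgj'⟩ := exists_mem_ρ_lt_of_normOf_lt hg
  obtain ⟨η, hη, hslack⟩ :=
    ENNReal.lt_iff_exists_add_pos_lt.mp (ENNReal.add_lt_add hfj hgj')
  obtain ⟨w, p, q, hp, hq, hpq⟩ := amalg i i' hi hi' η (ENNReal.coe_pos.mpr hη)
  refine ⟨w, j ≫ p, j' ≫ q, K.comp_mem hj hp, K.comp_mem hj' hq, ?_⟩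
  calc M.ρ (f ≫ j ≫ p) (g ≫ j' ≫ q)
      ≤ M.ρ (f ≫ j) i + M.ρ (g ≫ j') i' + M.ρ (i ≫ p) (i' ≫ q) := M.ρ_comp_comp_le j j' p q
    _ ≤ M.ρ (f ≫ j) i + M.ρ (g ≫ j') i' + η := by gcongr
    _ < ε + δ := hslack

/-- In a normed category with the almost amalgamation property, arrows of small norm can be
almost amalgamated: if `μ(f) < ε` and `μ(g) < δ` then there are `K`-arrows `f'`, `g'` with
`ρ(f' ∘ f, g' ∘ g) < ε + δ`. -/
theorem stmt4 {C : Type u} [Category.{v} C] (M : MetricEnrichment C) (K : WideSubcat C)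
    (amalg : AlmostAmalg M K) (ε δ : ENNReal) (hε : 0 < ε) (hδ : 0 < δ)
    {c a b : C} (f : c ⟶ a) (g : c ⟶ b)
    (hf : normOf M K f < ε) (hg : normOf M K g < δ) :
    ∃ (w : C) (f' : a ⟶ w) (g' : b ⟶ w), K.mem f' ∧ K.mem g' ∧
      M.ρ (f ≫ f') (g ≫ g') < ε + δ :=
  stmt4_general M K amalg ε δ f g hf hg
end

section
/- Let i : Z → X and j : Z → Y be linear isometric embeddings of Banach spaces. Set Δ = {(i(z), −j(z)) : z ∈ Z} ⊆ X ⊕ Y and W = (X ⊕ Y)/Δ̄. Then the induced maps i' : X → W and j' : Y → W are linear isometric embeddings satisfying i' ∘ i = j' ∘ j. -/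
/-!
The quotient norm of `[(x, y)]` is the ℓ¹-distance from `(x, y)` to `Δ`. Since `i z` and `-j z`
both have norm `‖z‖`, the triangle inequality bounds the distance from `(x, y)` to any
`(i z, -j z)` below by `|‖x‖ - ‖y‖|`, while the distance to `0` is `‖x‖ + ‖y‖`; the two bounds
agree when `x = 0` or `y = 0`. The identity `i' ∘ i = j' ∘ j` holds because
`(i z, 0) - (0, j z) ∈ Δ`.
-/

open Metric

theorem Submodule.norm_mk_topologicalClosure {R E : Type*} [Ring R] [SeminormedAddCommGroup E]
    [Module R E] [ContinuousConstSMul R E] (S : Submodule R E) (v : E) :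
    ‖(Submodule.Quotient.mk v : E ⧸ S.topologicalClosure)‖ = infDist v S := by
  rw [← infDist_closure, ← S.topologicalClosure_coe]
  exact QuotientAddGroup.norm_mk (S := S.topologicalClosure.toAddSubgroup) v

section PushoutAntidiagonal

variable {R Z X Y : Type*} [Ring R] [SeminormedAddCommGroup Z] [Module R Z]
  [SeminormedAddCommGroup X] [Module R X] [SeminormedAddCommGroup Y] [Module R Y]
  (i : Z →ₗᵢ[R] X) (j : Z →ₗᵢ[R] Y)

def pushoutAntidiagonal : Submodule R (WithLp 1 (X × Y)) :=
  LinearMap.range ((WithLp.linearEquiv 1 R (X × Y)).symm.toLinearMap.comp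
    (LinearMap.prod i.toLinearMap (-j.toLinearMap)))

theorem mem_pushoutAntidiagonal {v : WithLp 1 (X × Y)} :
    v ∈ pushoutAntidiagonal i j ↔ ∃ z, WithLp.toLp 1 (i z, -j z) = v :=
  Iff.rfl

theorem infDist_pushoutAntidiagonal_le (x : X) (y : Y) :
    infDist (WithLp.toLp 1 (x, y)) (pushoutAntidiagonal i j) ≤ ‖x‖ + ‖y‖ :=
  (infDist_le_dist_of_mem (zero_mem _)).trans_eq <| by
    rw [dist_zero_right, WithLp.prod_norm_eq_of_L1, WithLp.toLp_fst, WithLp.toLp_snd]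

theorem abs_norm_sub_norm_le_infDist_pushoutAntidiagonal (x : X) (y : Y) :
    |‖x‖ - ‖y‖| ≤ infDist (WithLp.toLp 1 (x, y)) (pushoutAntidiagonal i j) := by
  refine (le_infDist ⟨0, zero_mem _⟩).2 ?_
  intro v hv
  obtain ⟨z, rfl⟩ := (mem_pushoutAntidiagonal i j).1 hv
  have hx : |‖x‖ - ‖z‖| ≤ dist x (i z) := by
    simpa only [i.norm_map, dist_eq_norm] using abs_norm_sub_norm_le x (i z)
  have hy : |‖y‖ - ‖z‖| ≤ dist y (-j z) := by
    simpa only [norm_neg, j.norm_map, dist_eq_norm] using abs_norm_sub_norm_le y (-j z)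
  calc |‖x‖ - ‖y‖| ≤ |‖x‖ - ‖z‖| + |‖y‖ - ‖z‖| :=
        (abs_sub_le _ ‖z‖ _).trans_eq (by rw [abs_sub_comm ‖z‖])
    _ ≤ dist x (i z) + dist y (-j z) := add_le_add hx hy
    _ = _ := by simp only [WithLp.prod_dist_eq_of_L1, WithLp.toLp_fst, WithLp.toLp_snd]

end PushoutAntidiagonal

theorem stmt7_general {Z X Y : Type*}
    [NormedAddCommGroup Z] [NormedSpace ℝ Z]
    [NormedAddCommGroup X] [NormedSpace ℝ X]
    [NormedAddCommGroup Y] [NormedSpace ℝ Y]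
    (i : Z →ₗᵢ[ℝ] X) (j : Z →ₗᵢ[ℝ] Y)
    (Δ : Submodule ℝ (WithLp 1 (X × Y)))
    (hΔ : Δ = (LinearMap.range
      ((WithLp.linearEquiv 1 ℝ (X × Y)).symm.toLinearMap.comp
        (LinearMap.prod i.toLinearMap (-j.toLinearMap)))).topologicalClosure) :
    (∀ x : X, ‖(Submodule.Quotient.mk ((WithLp.equiv 1 (X × Y)).symm (x, 0)) :
        WithLp 1 (X × Y) ⧸ Δ)‖ = ‖x‖) ∧
    (∀ y : Y, ‖(Submodule.Quotient.mk ((WithLp.equiv 1 (X × Y)).symm (0, y)) :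
        WithLp 1 (X × Y) ⧸ Δ)‖ = ‖y‖) ∧
    (∀ z : Z, (Submodule.Quotient.mk ((WithLp.equiv 1 (X × Y)).symm (i z, 0)) :
        WithLp 1 (X × Y) ⧸ Δ) =
      Submodule.Quotient.mk ((WithLp.equiv 1 (X × Y)).symm (0, j z))) := by
  obtain rfl : Δ = (pushoutAntidiagonal i j).topologicalClosure := hΔ
  simp only [WithLp.equiv_symm_apply, Submodule.norm_mk_topologicalClosure]
  refine ⟨fun x => le_antisymm ?_ ?_, fun y => le_antisymm ?_ ?_, fun z => ?_⟩
  · simpa using infDist_pushoutAntidiagonal_le i j x 0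
  · simpa using abs_norm_sub_norm_le_infDist_pushoutAntidiagonal i j x 0
  · simpa using infDist_pushoutAntidiagonal_le i j 0 y
  · simpa using abs_norm_sub_norm_le_infDist_pushoutAntidiagonal i j 0 y
  · rw [Submodule.Quotient.eq]
    refine Submodule.le_topologicalClosure _ ((mem_pushoutAntidiagonal i j).2 ⟨z, ?_⟩)
    rw [← WithLp.toLp_sub, Prod.mk_sub_mk, sub_zero, zero_sub]

/-- Pushout of isometric embeddings of Banach spaces: given isometric embeddings
`i : Z → X`, `j : Z → Y`, let `Δ = {(i z, −j z) : z ∈ Z}` inside the ℓ¹-sum `X ⊕₁ Y` and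
`W = (X ⊕₁ Y)/Δ̄` with the quotient norm.  Then the induced maps `i' : x ↦ [(x,0)]` and
`j' : y ↦ [(0,y)]` are isometric and `i' ∘ i = j' ∘ j`. -/
theorem stmt7 {Z X Y : Type*}
    [NormedAddCommGroup Z] [NormedSpace ℝ Z] [CompleteSpace Z]
    [NormedAddCommGroup X] [NormedSpace ℝ X] [CompleteSpace X]
    [NormedAddCommGroup Y] [NormedSpace ℝ Y] [CompleteSpace Y]
    (i : Z →ₗᵢ[ℝ] X) (j : Z →ₗᵢ[ℝ] Y)
    (Δ : Submodule ℝ (WithLp 1 (X × Y)))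
    (hΔ : Δ = (LinearMap.range
      ((WithLp.linearEquiv 1 ℝ (X × Y)).symm.toLinearMap.comp
        (LinearMap.prod i.toLinearMap (-j.toLinearMap)))).topologicalClosure) :
    (∀ x : X, ‖(Submodule.Quotient.mk ((WithLp.equiv 1 (X × Y)).symm (x, 0)) :
        WithLp 1 (X × Y) ⧸ Δ)‖ = ‖x‖) ∧
    (∀ y : Y, ‖(Submodule.Quotient.mk ((WithLp.equiv 1 (X × Y)).symm (0, y)) :
        WithLp 1 (X × Y) ⧸ Δ)‖ = ‖y‖) ∧
    (∀ z : Z, (Submodule.Quotient.mk ((WithLp.equiv 1 (X × Y)).symm (i z, 0)) :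
        WithLp 1 (X × Y) ⧸ Δ) =
      Submodule.Quotient.mk ((WithLp.equiv 1 (X × Y)).symm (0, j z))) :=
  stmt7_general i j Δ hΔ
end

section
/- In a normed category (K, K⁰) with the almost amalgamation property, if a sequence u in K has a cofinal subsequence that is a Fraïssé sequence, then u itself is a Fraïssé sequence. -/
open CategoryTheory

universe u v

/-- A sequence in the subcategory `K`: a functor from `(ℕ, ≤)` to `C` whose bonding
arrows all belong to `K`. -/
structure KSeq (C : Type u) [Category.{v} C] (K : WideSubcat C) where
  obj : ℕ → C
  map : ∀ ⦃n m : ℕ⦄, n ≤ m → (obj n ⟶ obj m)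
  map_id : ∀ n : ℕ, map (le_refl n) = 𝟙 (obj n)
  map_comp : ∀ {n m k : ℕ} (h1 : n ≤ m) (h2 : m ≤ k),
    map (h1.trans h2) = map h1 ≫ map h2
  mem : ∀ {n m : ℕ} (h : n ≤ m), K.mem (map h)

/-- Condition (U): every `K`-object admits arrows of arbitrarily small norm into the
sequence. -/
def CondU {C : Type u} [Category.{v} C] (M : MetricEnrichment C) (K : WideSubcat C)
    (u : KSeq C K) : Prop :=
  ∀ (x : C) (ε : ENNReal), 0 < ε → ∃ (n : ℕ) (f : x ⟶ u.obj n), normOf M K f < ε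

/-- Condition (A): given `ε > 0` and a `K`-arrow `f : u_n → y`, there are `m > n` and
`g : y → u_m` with `μ(g) < ε` and `ρ(u_n^m, g ∘ f) < ε`. -/
def CondA {C : Type u} [Category.{v} C] (M : MetricEnrichment C) (K : WideSubcat C)
    (u : KSeq C K) : Prop :=
  ∀ (ε : ENNReal), 0 < ε → ∀ (n : ℕ) (y : C) (f : u.obj n ⟶ y), K.mem f →
    ∃ (m : ℕ) (hnm : n < m) (g : y ⟶ u.obj m),
      normOf M K g < ε ∧ M.ρ (u.map hnm.le) (f ≫ g) < ε

/-- A Fraïssé sequence: conditions (U) and (A). -/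
def IsFraisse {C : Type u} [Category.{v} C] (M : MetricEnrichment C) (K : WideSubcat C)
    (u : KSeq C K) : Prop :=
  CondU M K u ∧ CondA M K u

/-- The cofinal subsequence of `u` along a strictly monotone `φ : ℕ → ℕ`. -/
def KSeq.subseq {C : Type u} [Category.{v} C] {K : WideSubcat C} (u : KSeq C K)
    (φ : ℕ → ℕ) (hφ : StrictMono φ) : KSeq C K where
  obj n := u.obj (φ n)
  map _ _ h := u.map (hφ.monotone h)
  map_id n := u.map_id (φ n)
  map_comp _ _ := u.map_comp _ _
  mem _ := u.mem _

/-
A (U)-witness `x ⟶ u_{φ N}` for the subsequence is one for `u`. For (A), given `f : u_n ⟶ y`,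
almost amalgamate `f` with the bonding arrow `u_n ⟶ u_{φ (n+1)}` into some `w`, absorb `w` into
the subsequence by its condition (A), and compose; the two `ε/2` errors add up by the triangle
inequality, and precomposing with a `K`-arrow does not increase the norm.
-/

section

variable {C : Type u} [Category.{v} C] (M : MetricEnrichment C) {K : WideSubcat C}

theorem normOf_comp_le_of_mem {a b c : C} {k : a ⟶ b} (hk : K.mem k) (g : b ⟶ c) :
    normOf M K (k ≫ g) ≤ normOf M K g := by
  refine le_iInf₂ fun d i => le_iInf₂ fun j hi => le_iInf fun hj => ?_
  refine iInf₂_le_of_le d (k ≫ i) (iInf₂_le_of_le j (K.comp_mem hk hi) (iInf_le_of_le hj ?_))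
  simpa only [Category.assoc] using M.precomp_nonexpansive k (g ≫ j) i

theorem MetricEnrichment.ρ_comp_le_of_square {x a b w z : C} (p : x ⟶ b) (q : b ⟶ z)
    (f : x ⟶ a) (f' : a ⟶ w) (g' : b ⟶ w) (g : w ⟶ z) :
    M.ρ (p ≫ q) (f ≫ f' ≫ g) ≤ M.ρ q (g' ≫ g) + M.ρ (p ≫ g') (f ≫ f') :=
  calc M.ρ (p ≫ q) (f ≫ f' ≫ g)
      ≤ M.ρ (p ≫ q) (p ≫ g' ≫ g) + M.ρ ((p ≫ g') ≫ g) ((f ≫ f') ≫ g) := by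
        simpa only [Category.assoc] using M.ρ_triangle (p ≫ q) (p ≫ g' ≫ g) (f ≫ f' ≫ g)
    _ ≤ M.ρ q (g' ≫ g) + M.ρ (p ≫ g') (f ≫ f') :=
        add_le_add (M.precomp_nonexpansive _ _ _) (M.postcomp_nonexpansive _ _ _)

variable {M}

theorem CondU.of_subseq {u : KSeq C K} {φ : ℕ → ℕ} {hφ : StrictMono φ}
    (hU : CondU M K (u.subseq φ hφ)) : CondU M K u := fun x ε hε =>
  let ⟨N, f, hf⟩ := hU x ε hε
  ⟨φ N, f, hf⟩

theorem CondA.of_subseq (amalg : AlmostAmalg M K) {u : KSeq C K} {φ : ℕ → ℕ}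
    {hφ : StrictMono φ} (hA : CondA M K (u.subseq φ hφ)) : CondA M K u := by
  intro ε hε n y f hf
  have hε2 : 0 < ε / 2 := ENNReal.half_pos hε.ne'
  have hn : n < φ (n + 1) := (Nat.lt_succ_self n).trans_le hφ.le_apply
  obtain ⟨w, f', g', hf', hg', hsquare⟩ := amalg f (u.map hn.le) hf (u.mem _) (ε / 2) hε2
  obtain ⟨N, hN, g, hg, hbond⟩ := hA (ε / 2) hε2 (n + 1) w g' hg'
  have hm : n < φ N := hn.trans (hφ hN)
  refine ⟨φ N, hm, f' ≫ g, ?_, ?_⟩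
  · calc normOf M K (f' ≫ g) ≤ normOf M K g := normOf_comp_le_of_mem M hf' g
      _ < ε / 2 := hg
      _ ≤ ε := ENNReal.half_le_self
  · rw [show u.map hm.le = u.map hn.le ≫ u.map (hφ hN).le from u.map_comp _ _]
    calc M.ρ (u.map hn.le ≫ u.map (hφ hN).le) (f ≫ f' ≫ g)
        ≤ M.ρ (u.map (hφ hN).le) (g' ≫ g) + M.ρ (u.map hn.le ≫ g') (f ≫ f') :=
          M.ρ_comp_le_of_square _ _ _ _ _ _
      _ < ε / 2 + ε / 2 := ENNReal.add_lt_add hbond (by rwa [M.ρ_comm])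
      _ = ε := ENNReal.add_halves ε

end

/-- In a normed category with the almost amalgamation property, a sequence having a
cofinal Fraïssé subsequence is itself Fraïssé. -/
theorem stmt8 {C : Type u} [Category.{v} C] (M : MetricEnrichment C) (K : WideSubcat C)
    (amalg : AlmostAmalg M K) (u : KSeq C K) (φ : ℕ → ℕ) (hφ : StrictMono φ)
    (h : IsFraisse M K (u.subseq φ hφ)) : IsFraisse M K u :=
  ⟨h.1.of_subseq, h.2.of_subseq amalg⟩
end

section
/- Let f : X → Y be a continuous map of compact metric spaces which is 1-Lipschitz. Then the norm of f in the (opposite) normed category of compact metric spaces—i.e. the infimum of ρ(p, f∘q) over all 1-Lipschitz surjections p : Z → Y, q : Z → X from a common compact metric space Z—equals inf{ ε > 0 : f(X) is ε-dense in Y }. -/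
open Function Metric Set

/-!
Both sides equal `c = sup_y d(y, f(X))`. The right-hand side is `c` because `f(X)` is `ε`-dense
exactly for `ε ≥ c` (the distance to `f(X)` is attained by compactness). On the left, every span
`Y ←p Z →q X` with `p` surjective has `ρ(p, f ∘ q) ≥ c`, and the bound is attained by the span
`Z = {(x, y) : d(y, f x) ≤ c}` with the two coordinate projections.
-/

lemma Real.sInf_eq_of_Ioi_subset_of_subset_Ici {S : Set ℝ} {c : ℝ} (hIoi : Ioi c ⊆ S)
    (hIci : S ⊆ Ici c) : sInf S = c :=
  (isGLB_Ioi.of_subset_of_superset isGLB_Ici hIoi hIci).csInf_eq (nonempty_Ioi.mono hIoi)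

section Coverage

variable {X Y : Type*} [PseudoMetricSpace Y] [CompactSpace Y]

lemma bddAbove_range_infDist (s : Set Y) : BddAbove (range (infDist · s)) :=
  (isCompact_range (continuous_infDist_pt _)).bddAbove

variable [Nonempty Y]

lemma sInf_dense_radii_eq_iSup_infDist [Nonempty X] (f : X → Y) :
    sInf {ε : ℝ | 0 < ε ∧ ∀ y : Y, ∃ x : X, dist y (f x) ≤ ε} = ⨆ y, infDist y (range f) := by
  apply Real.sInf_eq_of_Ioi_subset_of_subset_Ici
  · intro ε (hε : _ < ε)
    refine ⟨(Real.iSup_nonneg fun _ => infDist_nonneg).trans_lt hε, fun y => ?_⟩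
    obtain ⟨_, ⟨x, rfl⟩, hx⟩ := (infDist_lt_iff (range_nonempty f)).1
      ((le_ciSup (bddAbove_range_infDist _) y).trans_lt hε)
    exact ⟨x, hx.le⟩
  · rintro ε ⟨-, hε⟩
    refine show _ ≤ ε from ciSup_le fun y => ?_
    obtain ⟨x, hx⟩ := hε y
    exact (infDist_le_dist_of_mem (mem_range_self x)).trans hx

lemma iSup_infDist_range_le_iSup_dist {Z : Type*} {f : X → Y} {p : Z → Y} (q : Z → X)
    (hp : Surjective p) : ⨆ y, infDist y (range f) ≤ ⨆ z, dist (p z) (f (q z)) := by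
  have hbdd : BddAbove (range fun z => dist (p z) (f (q z))) :=
    ⟨diam (univ : Set Y), forall_mem_range.2 fun z =>
      dist_le_diam_of_mem isBounded_of_compactSpace trivial trivial⟩
  refine ciSup_le fun y => ?_
  obtain ⟨z, rfl⟩ := hp y
  exact (infDist_le_dist_of_mem (mem_range_self (q z))).trans (le_ciSup hbdd z)

end Coverage

section GraphThickening

variable {X Y : Type*} [PseudoMetricSpace Y]

def graphCthickening (f : X → Y) (r : ℝ) : Set (X × Y) := {w | dist w.2 (f w.1) ≤ r}

variable {f : X → Y} {r : ℝ}

lemma isClosed_graphCthickening [TopologicalSpace X] (hf : Continuous f) :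
    IsClosed (graphCthickening f r) :=
  isClosed_le (continuous_snd.dist (hf.comp continuous_fst)) continuous_const

lemma lipschitzWith_fst_graphCthickening [PseudoMetricSpace X] :
    LipschitzWith 1 fun w : graphCthickening f r => w.1.1 :=
  (LipschitzWith.prod_fst.comp (LipschitzWith.subtype_val _)).weaken (one_mul 1).le

lemma lipschitzWith_snd_graphCthickening [PseudoMetricSpace X] :
    LipschitzWith 1 fun w : graphCthickening f r => w.1.2 :=
  (LipschitzWith.prod_snd.comp (LipschitzWith.subtype_val _)).weaken (one_mul 1).le

lemma surjective_fst_graphCthickening (hr : 0 ≤ r) :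
    Surjective fun w : graphCthickening f r => w.1.1 :=
  fun x => ⟨⟨(x, f x), by simpa [graphCthickening] using hr⟩, rfl⟩

lemma surjective_snd_graphCthickening [TopologicalSpace X] [CompactSpace X] [Nonempty X]
    (hf : Continuous f) (hr : ∀ y, infDist y (range f) ≤ r) :
    Surjective fun w : graphCthickening f r => w.1.2 := by
  intro y
  obtain ⟨_, ⟨x, rfl⟩, hx⟩ := (isCompact_range hf).exists_infDist_eq_dist (range_nonempty f) y
  exact ⟨⟨(x, y), show dist y (f x) ≤ r from hx ▸ hr y⟩, rfl⟩

end GraphThickening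

def spanDistances {X Y : Type} [MetricSpace X] [MetricSpace Y] (f : X → Y) : Set ℝ :=
  {r : ℝ | ∃ (Z : Type) (_ : MetricSpace Z) (_ : CompactSpace Z) (_ : Nonempty Z)
    (p : Z → Y) (q : Z → X), LipschitzWith 1 p ∧ LipschitzWith 1 q ∧
    Surjective p ∧ Surjective q ∧ r = ⨆ z : Z, dist (p z) (f (q z))}

section SpanDistances

variable {X Y : Type} [MetricSpace X] [MetricSpace Y] [CompactSpace Y] [Nonempty Y] {f : X → Y}

lemma iSup_infDist_le_of_mem_spanDistances {r : ℝ} (hr : r ∈ spanDistances f) :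
    ⨆ y, infDist y (range f) ≤ r := by
  obtain ⟨Z, _, _, _, p, q, -, -, hp, -, rfl⟩ := hr
  exact iSup_infDist_range_le_iSup_dist q hp

lemma iSup_infDist_mem_spanDistances [CompactSpace X] [Nonempty X] (hf : Continuous f) :
    ⨆ y, infDist y (range f) ∈ spanDistances f := by
  set c := ⨆ y, infDist y (range f)
  have hc : ∀ y, infDist y (range f) ≤ c := le_ciSup (bddAbove_range_infDist _)
  have : CompactSpace (graphCthickening f c) :=
    isCompact_iff_compactSpace.mp (isClosed_graphCthickening hf).isCompact
  have hsnd := surjective_snd_graphCthickening hf hc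
  have : Nonempty (graphCthickening f c) := hsnd.nonempty
  refine ⟨graphCthickening f c, inferInstance, inferInstance, inferInstance, _, _,
    lipschitzWith_snd_graphCthickening, lipschitzWith_fst_graphCthickening, hsnd,
    surjective_fst_graphCthickening (Real.iSup_nonneg fun _ => infDist_nonneg), ?_⟩
  exact le_antisymm (iSup_infDist_range_le_iSup_dist _ hsnd) (ciSup_le fun w => w.2)

end SpanDistances

theorem stmt10_general {X Y : Type} [MetricSpace X] [CompactSpace X] [Nonempty X]
    [MetricSpace Y] [CompactSpace Y]
    (f : X → Y) (hf : LipschitzWith 1 f) :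
    sInf {r : ℝ | ∃ (Z : Type) (_ : MetricSpace Z) (_ : CompactSpace Z) (_ : Nonempty Z)
        (p : Z → Y) (q : Z → X), LipschitzWith 1 p ∧ LipschitzWith 1 q ∧
        Surjective p ∧ Surjective q ∧ r = ⨆ z : Z, dist (p z) (f (q z))}
      = sInf {ε : ℝ | 0 < ε ∧ ∀ y : Y, ∃ x : X, dist y (f x) ≤ ε} := by
  have : Nonempty Y := .map f ‹_›
  change sInf (spanDistances f) = _
  rw [sInf_dense_radii_eq_iSup_infDist]
  exact IsLeast.csInf_eq ⟨iSup_infDist_mem_spanDistances hf.continuous,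
    fun _ => iSup_infDist_le_of_mem_spanDistances⟩

/-- For a 1-Lipschitz map `f : X → Y` of nonempty compact metric spaces, the norm of `f`
in the opposite normed category of compact metric spaces — the infimum of
`ρ(p, f ∘ q) = sup_z d(p z, f (q z))` over all 1-Lipschitz surjections `p : Z → Y`,
`q : Z → X` from a common nonempty compact metric space — equals
`inf{ε > 0 : f(X) is ε-dense in Y}`. -/
theorem stmt10 {X Y : Type} [MetricSpace X] [CompactSpace X] [Nonempty X]
    [MetricSpace Y] [CompactSpace Y] [Nonempty Y]
    (f : X → Y) (hf : LipschitzWith 1 f) :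
    sInf {r : ℝ | ∃ (Z : Type) (_ : MetricSpace Z) (_ : CompactSpace Z) (_ : Nonempty Z)
        (p : Z → Y) (q : Z → X), LipschitzWith 1 p ∧ LipschitzWith 1 q ∧
        Surjective p ∧ Surjective q ∧ r = ⨆ z : Z, dist (p z) (f (q z))}
      = sInf {ε : ℝ | 0 < ε ∧ ∀ y : Y, ∃ x : X, dist y (f x) ≤ ε} :=
  stmt10_general f hf
end

section
/- For every finite metric space X and every ε > 0 there exist a finite metric space Y with all distances rational and a bijection h : Y → X that is 1-Lipschitz and whose inverse has Lipschitz constant < 1 + ε. -/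
/-!
Let `δ > 0` be the smallest nonzero distance of `X` and `η = εδ/4`. Replace every nonzero
distance `t` by a rational number in `(t + η, t + 2η)`. The triangle inequality survives: a side
grows by at most `2η`, while the sum of the two other sides grows by at least `2η`. Distances only
grow, and since every nonzero distance is at least `δ`, by a factor at most `1 + 2η/δ = 1 + ε/2`.
-/

open scoped NNReal

theorem exists_pos_le_dist_of_ne (X : Type*) [MetricSpace X] [Finite X] :
    ∃ δ > 0, ∀ a b : X, a ≠ b → δ ≤ dist a b := by
  obtain hempty | ⟨_, hne⟩ := Set.eq_empty_or_nonempty {p : X × X | p.1 ≠ p.2}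
  · refine ⟨1, one_pos, fun a b hab => ?_⟩
    exact absurd (hempty.subset (show (a, b) ∈ {p : X × X | p.1 ≠ p.2} from hab))
      (Set.notMem_empty _)
  · obtain ⟨⟨a, b⟩, hab, hmin⟩ :=
      Set.exists_min_image _ (fun p => dist p.1 p.2) (Set.toFinite _) ⟨_, hne⟩
    exact ⟨dist a b, dist_pos.2 hab, fun x y hxy => hmin (x, y) hxy⟩

section PerturbedDist

variable {X : Type*} [MetricSpace X] {g : ℝ → ℝ} {η : ℝ}

open Classical in
noncomputable def perturbedDist (g : ℝ → ℝ) (a b : X) : ℝ :=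
  if a = b then 0 else g (dist a b)

@[simp]
theorem perturbedDist_self (a : X) : perturbedDist g a a = 0 := if_pos rfl

theorem perturbedDist_of_ne {a b : X} (hab : a ≠ b) : perturbedDist g a b = g (dist a b) :=
  if_neg hab

theorem perturbedDist_comm (a b : X) : perturbedDist g a b = perturbedDist g b a := by
  by_cases hab : a = b
  · rw [hab]
  · rw [perturbedDist_of_ne hab, perturbedDist_of_ne (Ne.symm hab), dist_comm]

theorem dist_add_le_perturbedDist (hg : ∀ t, t + η ≤ g t) {a b : X} (hab : a ≠ b) :
    dist a b + η ≤ perturbedDist g a b :=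
  perturbedDist_of_ne hab ▸ hg _

theorem dist_le_perturbedDist (hη : 0 ≤ η) (hg : ∀ t, t + η ≤ g t) (a b : X) :
    dist a b ≤ perturbedDist g a b := by
  rcases eq_or_ne a b with rfl | hab
  · simp
  · linarith [dist_add_le_perturbedDist hg hab]

theorem perturbedDist_le_dist_add (hη : 0 ≤ η) (hg : ∀ t, g t ≤ t + 2 * η) (a b : X) :
    perturbedDist g a b ≤ dist a b + 2 * η := by
  rcases eq_or_ne a b with rfl | hab
  · simp [hη]
  · exact perturbedDist_of_ne hab ▸ hg _

theorem perturbedDist_triangle (hη : 0 ≤ η) (hg_lower : ∀ t, t + η ≤ g t)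
    (hg_upper : ∀ t, g t ≤ t + 2 * η) (a b c : X) :
    perturbedDist g a c ≤ perturbedDist g a b + perturbedDist g b c := by
  rcases eq_or_ne a c with rfl | hac
  · rw [perturbedDist_self]
    exact add_nonneg (dist_nonneg.trans (dist_le_perturbedDist hη hg_lower a b))
      (dist_nonneg.trans (dist_le_perturbedDist hη hg_lower b a))
  rcases eq_or_ne a b with rfl | hab
  · simp
  rcases eq_or_ne b c with rfl | hbc
  · simp
  linarith [perturbedDist_le_dist_add hη hg_upper a c, dist_add_le_perturbedDist hg_lower hab,
    dist_add_le_perturbedDist hg_lower hbc, dist_triangle a b c]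

theorem perturbedDist_le_mul {δ c : ℝ} (hη : 0 ≤ η) (hg : ∀ t, g t ≤ t + 2 * η)
    (hδ : ∀ a b : X, a ≠ b → δ ≤ dist a b) (hηδ : 2 * η ≤ c * δ) (hc : 0 ≤ c) (a b : X) :
    perturbedDist g a b ≤ (1 + c) * dist a b := by
  rcases eq_or_ne a b with rfl | hab
  · simp
  · nlinarith [perturbedDist_le_dist_add hη hg a b, hδ a b hab]

@[reducible]
noncomputable def perturbedMetric (hη : 0 ≤ η) (hg_lower : ∀ t, t + η ≤ g t)
    (hg_upper : ∀ t, g t ≤ t + 2 * η) : MetricSpace X where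
  dist := perturbedDist g
  dist_self := perturbedDist_self
  dist_comm := perturbedDist_comm
  dist_triangle := perturbedDist_triangle hη hg_lower hg_upper
  eq_of_dist_eq_zero {a b} h := by
    by_contra hab
    linarith [dist_add_le_perturbedDist hg_lower hab, dist_pos.2 hab]

theorem exists_rat_perturbedDist_eq (r : ℝ → ℚ) (a b : X) :
    ∃ q : ℚ, perturbedDist (fun t => (r t : ℝ)) a b = q := by
  rcases eq_or_ne a b with rfl | hab
  · exact ⟨0, by simp⟩
  · exact ⟨r (dist a b), perturbedDist_of_ne hab⟩

theorem lipschitzWith_one_id_perturbedMetric (hη : 0 ≤ η) (hg_lower : ∀ t, t + η ≤ g t)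
    (hg_upper : ∀ t, g t ≤ t + 2 * η) :
    @LipschitzWith X X (perturbedMetric hη hg_lower hg_upper).toPseudoEMetricSpace _ 1 id :=
  @LipschitzWith.of_dist_le_mul X X (perturbedMetric hη hg_lower hg_upper).toPseudoMetricSpace _ 1
    id fun a b => by
      rw [NNReal.coe_one, one_mul]
      exact dist_le_perturbedDist hη hg_lower a b

theorem lipschitzWith_id_perturbedMetric {δ : ℝ} {c : ℝ≥0} (hη : 0 ≤ η)
    (hg_lower : ∀ t, t + η ≤ g t) (hg_upper : ∀ t, g t ≤ t + 2 * η)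
    (hδ : ∀ a b : X, a ≠ b → δ ≤ dist a b) (hηδ : 2 * η ≤ c * δ) :
    @LipschitzWith X X _ (perturbedMetric hη hg_lower hg_upper).toPseudoEMetricSpace (1 + c) id :=
  @LipschitzWith.of_dist_le_mul X X _ (perturbedMetric hη hg_lower hg_upper).toPseudoMetricSpace
    (1 + c) id fun a b => by
      rw [NNReal.coe_add, NNReal.coe_one]
      exact perturbedDist_le_mul hη hg_upper hδ hηδ c.2 a b

end PerturbedDist

/-- For every finite metric space `X` and `ε > 0` there exist a finite metric space `Y`
with all distances rational and a bijection `h : Y → X` that is 1-Lipschitz and whose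
inverse has Lipschitz constant `< 1 + ε`. -/
theorem stmt13 (X : Type) [MetricSpace X] [Fintype X] (ε : ℝ) (hε : 0 < ε) :
    ∃ (Y : Type) (_ : MetricSpace Y) (_ : Fintype Y) (h : Y ≃ X),
      (∀ a b : Y, ∃ q : ℚ, dist a b = (q : ℝ)) ∧
      LipschitzWith 1 h ∧
      ∃ L : NNReal, (L : ℝ) < 1 + ε ∧ LipschitzWith L h.symm := by
  obtain ⟨δ, hδ, hδ_le⟩ := exists_pos_le_dist_of_ne X
  set c : ℝ≥0 := (ε / 2).toNNReal
  have hc : (c : ℝ) = ε / 2 := Real.coe_toNNReal _ (by positivity)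
  set η := c * δ / 2 with hη_def
  have hη : 0 < η := by positivity
  choose r hr_lower hr_upper using fun t : ℝ => exists_rat_btwn (lt_add_of_pos_right (t + η) hη)
  have hg_lower : ∀ t, t + η ≤ r t := fun t => (hr_lower t).le
  have hg_upper : ∀ t, (r t : ℝ) ≤ t + 2 * η := fun t => by linarith [hr_upper t]
  refine ⟨X, perturbedMetric hη.le hg_lower hg_upper, ‹_›, Equiv.refl X,
    exists_rat_perturbedDist_eq r, lipschitzWith_one_id_perturbedMetric hη.le hg_lower hg_upper,
    1 + c, by push_cast; linarith,
    lipschitzWith_id_perturbedMetric hη.le hg_lower hg_upper hδ_le (by linarith [hη_def])⟩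
end

section
/- Let K be a compact Hausdorff space satisfying: for every surjection f : T → S of nonempty finite (discrete) sets and every continuous surjection p : K → S, there exists a continuous surjection q : K → T with f ∘ q = p. Then K has no isolated points. -/
/-!
If `{x}` were clopen, the two-block partition `{x}, {x}ᶜ` (or the trivial one, when `K = {x}`)
would have to lift along a surjection of finite sets that doubles the block of `x`. A lift is
surjective, so it would take two distinct values on the single point `x`.
-/

open Function Set

def LiftsFiniteSurjections (K : Type*) [TopologicalSpace K] : Prop :=
  ∀ (S T : Type) [Fintype S] [Fintype T] [Nonempty S] [Nonempty T] (f : T → S),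
    Surjective f →
    ∀ p : K → S, @Continuous K S _ ⊥ p → Surjective p →
      ∃ q : K → T, @Continuous K T _ ⊥ q ∧ Surjective q ∧ f ∘ q = p

theorem Function.Surjective.subsingleton_preimage_of_comp_eq {α β γ : Type*} {q : α → β}
    {f : β → γ} {p : α → γ} (hq : Surjective q) (hfq : f ∘ q = p) {s : γ}
    (hs : (p ⁻¹' {s}).Subsingleton) : (f ⁻¹' {s}).Subsingleton := by
  intro t ht u hu
  obtain ⟨a, rfl⟩ := hq t
  obtain ⟨b, rfl⟩ := hq u
  rw [hs (by simpa [← hfq] using ht : p a = s) (by simpa [← hfq] using hu : p b = s)]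

namespace LiftsFiniteSurjections

variable {K : Type*} [TopologicalSpace K]

theorem not_subsingleton_preimage (hK : LiftsFiniteSurjections K) {S : Type} [Fintype S]
    [Nonempty S] {p : K → S} (hp : @Continuous K S _ ⊥ p) (hps : Surjective p) (s : S) :
    ¬ (p ⁻¹' {s}).Subsingleton := by
  intro hs
  -- `f` has the two points `none` and `some s` over `s`
  let f : Option S → S := fun o => o.getD s
  obtain ⟨q, -, hq, hfq⟩ := hK S (Option S) f (fun t => ⟨some t, rfl⟩) p hp hps
  exact Option.some_ne_none s (hq.subsingleton_preimage_of_comp_eq hfq hs rfl rfl)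

theorem nontrivial_of_isClopen (hK : LiftsFiniteSurjections K) {U : Set K} (hU : IsClopen U)
    (hne : U.Nonempty) : U.Nontrivial := by
  classical
  have : Nonempty K := hne.to_subtype.map Subtype.val
  -- corestricting to the range keeps `p` surjective even when `U = univ`
  let p : K → range U.boolIndicator := rangeFactorization U.boolIndicator
  have hp : @Continuous K _ _ ⊥ p := by
    rw [← DiscreteTopology.eq_bot (α := range U.boolIndicator)]
    exact continuous_rangeFactorization_iff.mpr ((continuous_boolIndicator_iff_isClopen U).mpr hU)
  obtain ⟨x, hx⟩ := hne
  have hfibre : p ⁻¹' {p x} = U := by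
    ext y
    rw [mem_preimage, mem_singleton_iff, rangeFactorization_eq_rangeFactorization_iff,
      (mem_iff_boolIndicator U x).mp hx, mem_iff_boolIndicator]
  rw [← not_subsingleton_iff, ← hfibre]
  exact hK.not_subsingleton_preimage hp rangeFactorization_surjective (p x)

end LiftsFiniteSurjections

theorem stmt17_general (K : Type*) [TopologicalSpace K] [T2Space K]
    (H : ∀ (S T : Type) [Fintype S] [Fintype T] [Nonempty S] [Nonempty T] (f : T → S),
      Function.Surjective f →
      ∀ p : K → S, @Continuous K S _ ⊥ p → Function.Surjective p →
        ∃ q : K → T, @Continuous K T _ ⊥ q ∧ Function.Surjective q ∧ f ∘ q = p) :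
    ∀ x : K, ¬ IsOpen ({x} : Set K) := fun x hx =>
  (LiftsFiniteSurjections.nontrivial_of_isClopen H ⟨isClosed_singleton, hx⟩
    (singleton_nonempty x)).not_subsingleton subsingleton_singleton

/-- Let `K` be a nonempty compact Hausdorff space such that every continuous surjection
`p : K → S` onto a nonempty finite discrete set lifts along every surjection `f : T → S`
of nonempty finite discrete sets (i.e. there is a continuous surjection `q : K → T` with
`f ∘ q = p`).  Then `K` has no isolated points. -/
theorem stmt17 (K : Type*) [TopologicalSpace K] [CompactSpace K] [T2Space K] [Nonempty K]
    (H : ∀ (S T : Type) [Fintype S] [Fintype T] [Nonempty S] [Nonempty T] (f : T → S),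
      Function.Surjective f →
      ∀ p : K → S, @Continuous K S _ ⊥ p → Function.Surjective p →
        ∃ q : K → T, @Continuous K T _ ⊥ q ∧ Function.Surjective q ∧ f ∘ q = p) :
    ∀ x : K, ¬ IsOpen ({x} : Set K) :=
  stmt17_general K H
end

section
/- Let C = 2^ℕ × [0,1] (the Cantor set times the unit interval) and p : C → 2^ℕ the projection. Then for every continuous surjection f : C → S onto a finite discrete set S there exists a unique map g : 2^ℕ → S with f = g ∘ p; consequently C satisfies the lifting property (C) for finite quotients (for every finite surjection f : T → S and quotient p : C → S there is a quotient q : C → T with f∘q = p), yet C is not homeomorphic to the Cantor set. -/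
/-!
A continuous map from `X × [0,1]` to a discrete space is constant on the connected slices
`{x} × [0,1]`, so it factors through the projection to `X`. On the Cantor space, a map to a finite
discrete set depends only on the first `N` coordinates (Lebesgue number lemma for the metric
`2 ^ (-firstDiff)`). The remaining coordinates form again a Cantor space, which maps continuously
onto each fibre of `T → S` by Hausdorff–Alexandroff; this gives the lift. The same slices show
that `2^ℕ × [0,1]` is not totally disconnected, whereas the Cantor space is.
-/

open Set Function

theorem IsLocallyConstant.exists_unique_eq_comp_fst {X Y S : Type*} [TopologicalSpace X]
    [TopologicalSpace Y] [PreconnectedSpace Y] [Nonempty Y] {f : X × Y → S}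
    (hf : IsLocallyConstant f) : ∃! g : X → S, f = g ∘ Prod.fst := by
  obtain ⟨y₀⟩ := ‹Nonempty Y›
  refine ⟨fun x => f (x, y₀), funext fun ⟨x, y⟩ => ?_, fun g hg => funext fun x => ?_⟩
  · exact (hf.comp_continuous (Continuous.prodMk_right x)).apply_eq_of_preconnectedSpace y y₀
  · exact (congrFun hg (x, y₀)).symm

namespace PiNat

attribute [local instance] PiNat.metricSpace

theorem exists_apply_eq_of_mem_cylinder {E : ℕ → Type*} [∀ n, TopologicalSpace (E n)]
    [∀ n, DiscreteTopology (E n)] [∀ n, CompactSpace (E n)] {S : Type*} {g : (∀ n, E n) → S}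
    (hg : IsLocallyConstant g) : ∃ N, ∀ x y, y ∈ cylinder x N → g y = g x := by
  obtain ⟨δ, δ_pos, hδ⟩ := lebesgue_number_lemma_of_metric isCompact_univ
    (c := fun s : S => g ⁻¹' {s}) hg.isOpen_fiber fun x _ => mem_iUnion.2 ⟨g x, rfl⟩
  obtain ⟨N, hN⟩ := exists_pow_lt_of_lt_one δ_pos (by norm_num : (1 / 2 : ℝ) < 1)
  refine ⟨N, fun x y hy => ?_⟩
  obtain ⟨s, hs⟩ := hδ x trivial
  have hy : g y = s := hs (Metric.mem_ball.2 ((mem_cylinder_iff_dist_le.1 hy).trans_lt hN))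
  rw [hy, hs (Metric.mem_ball_self δ_pos)]

end PiNat

theorem exists_nat_bool_continuous_surjective_of_finite (X : Type*) [TopologicalSpace X]
    [DiscreteTopology X] [Finite X] [Nonempty X] :
    ∃ f : (ℕ → Bool) → X, Continuous f ∧ Surjective f := by
  let := TopologicalSpace.metrizableSpaceMetric X
  exact exists_nat_bool_continuous_surjective_of_compact X

theorem exists_nat_bool_continuous_surjective_lift {S T : Type*} [TopologicalSpace S]
    [DiscreteTopology S] [TopologicalSpace T] [DiscreteTopology T] [Finite T] {f : T → S}
    (hf : Surjective f) {g : (ℕ → Bool) → S} (hg : Continuous g) (hgs : Surjective g) :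
    ∃ h : (ℕ → Bool) → T, Continuous h ∧ Surjective h ∧ f ∘ h = g := by
  obtain ⟨N, hN⟩ :=
    PiNat.exists_apply_eq_of_mem_cylinder ((IsLocallyConstant.iff_continuous g).2 hg)
  have hfiber (s : S) : ∃ τ : (ℕ → Bool) → f ⁻¹' {s}, Continuous τ ∧ Surjective τ :=
    have : Nonempty (f ⁻¹' {s}) := (hf s).elim fun t ht => ⟨⟨t, ht⟩⟩
    exists_nat_bool_continuous_surjective_of_finite _
  choose τ hτ hτs using hfiber
  let drop (x : ℕ → Bool) : ℕ → Bool := fun n => x (N + n)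
  refine ⟨fun x => τ (g x) (drop x), ?_, fun t => ?_, funext fun x => (τ (g x) (drop x)).2⟩
  · have : Continuous fun p : S × (ℕ → Bool) => (τ p.1 p.2 : T) :=
      continuous_prod_of_discrete_left.2 fun s => continuous_subtype_val.comp (hτ s)
    exact this.comp (hg.prodMk (by fun_prop))
  · obtain ⟨x₀, hx₀⟩ := hgs (f t)
    obtain ⟨y, hy⟩ := hτs (f t) ⟨t, rfl⟩
    let x (n : ℕ) : Bool := if n < N then x₀ n else y (n - N)
    have hgx : g x = f t := (hN x₀ x fun i hi => if_pos hi).trans hx₀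
    have hdrop : drop x = y := funext fun n => by simp [drop, x]
    have key (s : S) (hs : s = f t) : (τ s (drop x) : T) = t := by subst hs; rw [hdrop, hy]
    exact ⟨x, key _ hgx⟩

theorem not_totallyDisconnectedSpace_prod {X Y : Type*} [TopologicalSpace X] [TopologicalSpace Y]
    [Nonempty X] [PreconnectedSpace Y] [Nontrivial Y] : ¬ TotallyDisconnectedSpace (X × Y) := by
  intro _
  obtain ⟨x⟩ := ‹Nonempty X›
  obtain ⟨y₁, y₂, hne⟩ := exists_pair_ne Y
  have h := (isPreconnected_range (Continuous.prodMk_right (Y := Y) x)).subsingleton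
    (mem_range_self y₁) (mem_range_self y₂)
  exact hne (Prod.mk.inj h).2

/-- Let `C = 2^ℕ × [0,1]` and `p : C → 2^ℕ` the projection.  Every continuous surjection
`f : C → S` onto a finite discrete set factors uniquely through `p`; consequently `C`
satisfies the lifting property (C) for finite quotients, yet `C` is not homeomorphic to
the Cantor set. -/
theorem stmt18 :
    (∀ (S : Type) [Fintype S] [Nonempty S] (f : (ℕ → Bool) × unitInterval → S),
      @Continuous _ S _ ⊥ f → Function.Surjective f →
        ∃! g : (ℕ → Bool) → S, f = g ∘ Prod.fst) ∧
    (∀ (S T : Type) [Fintype S] [Fintype T] [Nonempty S] [Nonempty T] (f : T → S),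
      Function.Surjective f →
      ∀ p : (ℕ → Bool) × unitInterval → S, @Continuous _ S _ ⊥ p → Function.Surjective p →
        ∃ q : (ℕ → Bool) × unitInterval → T,
          @Continuous _ T _ ⊥ q ∧ Function.Surjective q ∧ f ∘ q = p) ∧
    ¬ Nonempty ((ℕ → Bool) × unitInterval ≃ₜ (ℕ → Bool)) := by
  refine ⟨fun S _ _ f hf _ => ?_, fun S T _ _ _ _ f hf p hp hps => ?_, ?_⟩
  · let : TopologicalSpace S := ⊥
    have : DiscreteTopology S := ⟨rfl⟩
    exact ((IsLocallyConstant.iff_continuous f).2 hf).exists_unique_eq_comp_fst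
  · let : TopologicalSpace S := ⊥
    have : DiscreteTopology S := ⟨rfl⟩
    let : TopologicalSpace T := ⊥
    have : DiscreteTopology T := ⟨rfl⟩
    obtain ⟨g, hpg, -⟩ := ((IsLocallyConstant.iff_continuous p).2 hp).exists_unique_eq_comp_fst
    have hg : Continuous g := (hpg ▸ hp).comp (Continuous.prodMk_left (0 : unitInterval))
    obtain ⟨h, hh, hhs, hfh⟩ :=
      exists_nat_bool_continuous_surjective_lift hf hg (hpg ▸ hps).of_comp
    refine ⟨h ∘ Prod.fst, hh.comp continuous_fst, hhs.comp Prod.fst_surjective, ?_⟩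
    rw [hpg, ← hfh]
    rfl
  · rintro ⟨e⟩
    exact not_totallyDisconnectedSpace_prod e.symm.totallyDisconnectedSpace
end
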